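/- If D is a Δ-matroid and F is a feasible set of D, then F contains some feasible set of minimum cardinality (i.e., F is spanning in the lower matroid). -/

import Mathlib

open Set
open scoped symmDiff

/-- The symmetric exchange axiom for a collection of subsets. -/
def SymExch {α : Type*} (𝓕 : Set (Set α)) : Prop :=
  ∀ ⦃F₁⦄, F₁ ∈ 𝓕 → ∀ ⦃F₂⦄, F₂ ∈ 𝓕 →
    ∀ x ∈ F₁ ∆ F₂, ∃ y ∈ F₁ ∆ F₂, F₁ ∆ ({x, y} : Set α) ∈ 𝓕

/-- A Δ-matroid on a finite ground set. -/
structure DeltaMatroid (α : Type*) where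
  E : Set α
  Feasible : Set (Set α)
  ground_finite : E.Finite
  subset_ground : ∀ F ∈ Feasible, F ⊆ E
  feasible_nonempty : Feasible.Nonempty
  exchange : SymExch Feasible

/-- A lower base: a feasible set of minimum cardinality. -/
def DeltaMatroid.LowerBase {α : Type*} (D : DeltaMatroid α) (B : Set α) : Prop :=
  B ∈ D.Feasible ∧ ∀ F ∈ D.Feasible, B.ncard ≤ F.ncard

/-- An upper base: a feasible set of maximum cardinality. -/
def DeltaMatroid.UpperBase {α : Type*} (D : DeltaMatroid α) (B : Set α) : Prop :=
  B ∈ D.Feasible ∧ ∀ F ∈ D.Feasible, F.ncard ≤ B.ncard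

/-- A circuit of a matroid: a minimal dependent set. -/
def Matroid.IsCircuitOld {α : Type*} (M : Matroid α) (C : Set α) : Prop :=
  C ⊆ M.E ∧ ¬ M.Indep C ∧ ∀ D, D ⊂ C → M.Indep D

/-- Every circuit of `Mu` is a union of circuits of `Ml`. -/
def CircuitsUnion {α : Type*} (Mu Ml : Matroid α) : Prop :=
  ∀ C, Mu.IsCircuitOld C → ∃ 𝒞 : Set (Set α), (∀ C' ∈ 𝒞, Ml.IsCircuitOld C') ∧ C = ⋃₀ 𝒞

/-- `M` is the upper matroid of the Δ-matroid `D`. -/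
def IsUpperMatroid {α : Type*} (D : DeltaMatroid α) (M : Matroid α) : Prop :=
  M.E = D.E ∧ ∀ B, M.IsBase B ↔ D.UpperBase B

/-- `M` is the lower matroid of the Δ-matroid `D`. -/
def IsLowerMatroid {α : Type*} (D : DeltaMatroid α) (M : Matroid α) : Prop :=
  M.E = D.E ∧ ∀ B, M.IsBase B ↔ D.LowerBase B

/-- every feasible set contains a minimum-cardinality feasible set. -/
theorem feasible_spans_lower {α : Type*} (D : DeltaMatroid α) (F : Set α)
    (hF : F ∈ D.Feasible) : ∃ L, D.LowerBase L ∧ L ⊆ F := by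
  have hfeasfin : D.Feasible.Finite :=
    Set.Finite.subset D.ground_finite.finite_subsets (fun G hG => D.subset_ground G hG)
  have hGfin : ∀ G ∈ D.Feasible, G.Finite := fun G hG =>
    D.ground_finite.subset (D.subset_ground G hG)
  obtain ⟨B0, hB0, hB0min⟩ :=
    Set.exists_min_image D.Feasible Set.ncard hfeasfin D.feasible_nonempty
  set LB := {B | D.LowerBase B} with hLBdef
  have hLBsub : LB ⊆ D.Feasible := fun B hB => hB.1
  have hLBfin : LB.Finite := hfeasfin.subset hLBsub
  have hLBne : LB.Nonempty := ⟨B0, hB0, hB0min⟩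
  obtain ⟨B, hB, hBmin⟩ := Set.exists_min_image LB (fun B => (B \ F).ncard) hLBfin hLBne
  refine ⟨B, hB, ?_⟩
  by_contra hnot
  obtain ⟨x, hxB, hxF⟩ := Set.not_subset.mp hnot
  have hxs : x ∈ B ∆ F := Or.inl ⟨hxB, hxF⟩
  obtain ⟨y, hy, hfeas⟩ := D.exchange hB.1 hF x hxs
  have hBfin : B.Finite := hGfin B hB.1
  rcases hy with ⟨hyB, hyF⟩ | ⟨hyF, hyB⟩
  · -- y ∈ B \ F : B ∆ {x,y} ⊊ B, strictly smaller, contradiction with lower base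
    have hsub : B ∆ ({x, y} : Set α) ⊆ B \ {x} := by
      intro z hz
      rcases hz with ⟨hzB, hz2⟩ | ⟨hz2, hzB⟩
      · exact ⟨hzB, fun h => hz2 (Or.inl h)⟩
      · rcases hz2 with h | h
        · exact absurd (h ▸ hxB) hzB
        · exact absurd (h ▸ hyB) hzB
    have hlt : (B ∆ ({x, y} : Set α)).ncard < B.ncard :=
      calc (B ∆ ({x, y} : Set α)).ncard ≤ (B \ {x}).ncard :=
            Set.ncard_le_ncard hsub (hBfin.subset Set.diff_subset)
        _ < B.ncard := Set.ncard_diff_singleton_lt_of_mem hxB hBfin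
    exact absurd (hB.2 _ hfeas) (not_le.mpr hlt)
  · -- y ∈ F \ B
    have hBeq : B ∆ ({x, y} : Set α) = insert y (B \ {x}) := by
      ext z
      simp only [Set.mem_symmDiff, Set.mem_insert_iff, Set.mem_diff,
        Set.mem_singleton_iff]
      constructor
      · rintro (⟨hzB, hz2⟩ | ⟨(h | h), hzB⟩)
        · exact Or.inr ⟨hzB, fun h => hz2 (Or.inl h)⟩
        · exact absurd (h ▸ hxB) hzB
        · exact Or.inl h
      · rintro (rfl | ⟨hzB, hzx⟩)
        · exact Or.inr ⟨Or.inr rfl, hyB⟩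
        · exact Or.inl ⟨hzB, by rintro (rfl | rfl); exacts [hzx rfl, hyB hzB]⟩
    have hynot : y ∉ B \ {x} := fun h => hyB h.1
    have hcard : (insert y (B \ {x})).ncard = B.ncard := by
      rw [Set.ncard_insert_of_notMem hynot (hBfin.subset Set.diff_subset),
        Set.ncard_diff_singleton_add_one hxB hBfin]
    have hLB' : insert y (B \ {x}) ∈ LB := by
      refine ⟨hBeq ▸ hfeas, fun G hG => ?_⟩
      rw [hcard]; exact hB.2 G hG
    have hdiffeq : insert y (B \ {x}) \ F = (B \ F) \ {x} := by
      ext z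
      simp only [Set.mem_insert_iff, Set.mem_diff, Set.mem_singleton_iff]
      constructor
      · rintro ⟨rfl | ⟨hzB, hzx⟩, hzF⟩
        · exact absurd hyF hzF
        · exact ⟨⟨hzB, hzF⟩, hzx⟩
      · rintro ⟨⟨hzB, hzF⟩, hzx⟩
        exact ⟨Or.inr ⟨hzB, hzx⟩, hzF⟩
    have hlt : (insert y (B \ {x}) \ F).ncard < (B \ F).ncard := by
      rw [hdiffeq]
      exact Set.ncard_diff_singleton_lt_of_mem ⟨hxB, hxF⟩ (hBfin.subset Set.diff_subset)
    exact absurd (hBmin _ hLB') (not_le.mpr hlt)
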